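/- Let real numbers satisfy 0 < x^0_0 < y^0_0 < x^1_0 < y^1_0 < 1 and 0 < x^1_1 < y^1_1 < x^0_1 < y^0_1 < 1, and let X = [0,1]^2 \ (R^0 ∪ R^1) where R^0 = (x^0_0, y^0_0) × (x^0_1, y^0_1) and R^1 = (x^1_0, y^1_0) × (x^1_1, y^1_1) (one hole in the upper-left region, one in the lower-right region). Then the set of dihomotopy classes of total directed paths in X has exactly 3 elements. -/

import Mathlib

open Set

/-- A directed path in `Y ⊆ ℝⁿ`: a continuous map from the unit interval, all of whose
coordinate functions are monotone nondecreasing, with values in `Y`. -/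
def IsDiPath (n : ℕ) (Y : Set (Fin n → ℝ)) (p : unitInterval → Fin n → ℝ) : Prop :=
  Continuous p ∧ (∀ t, p t ∈ Y) ∧ ∀ j : Fin n, Monotone fun t => p t j

/-- A total directed path goes from `(0,…,0)` to `(1,…,1)`. -/
def IsTotalDiPath (n : ℕ) (Y : Set (Fin n → ℝ)) (p : unitInterval → Fin n → ℝ) : Prop :=
  IsDiPath n Y p ∧ p 0 = (fun _ => (0:ℝ)) ∧ p 1 = (fun _ => (1:ℝ))

/-- The unit cube `[0,1]^n`. -/
def cube (n : ℕ) : Set (Fin n → ℝ) := {z | ∀ j, z j ∈ Icc (0:ℝ) 1}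

/-- Elementary dihomotopy of directed paths with fixed common endpoints in `Y`. -/
def ElemDihomotopic (n : ℕ) (Y : Set (Fin n → ℝ)) (p q : unitInterval → Fin n → ℝ) : Prop :=
  IsDiPath n Y p ∧ IsDiPath n Y q ∧ p 0 = q 0 ∧ p 1 = q 1 ∧
  ∃ H : unitInterval → unitInterval → Fin n → ℝ,
    Continuous (fun tu : unitInterval × unitInterval => H tu.1 tu.2) ∧
    H 0 = p ∧ H 1 = q ∧ (∀ t, IsDiPath n Y (H t)) ∧
    ∀ (u : unitInterval) (j : Fin n), Monotone fun t => H t u j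

/-- Dihomotopy: equivalence relation generated by elementary dihomotopy. -/
def Dihomotopic (n : ℕ) (Y : Set (Fin n → ℝ)) :
    (unitInterval → Fin n → ℝ) → (unitInterval → Fin n → ℝ) → Prop :=
  Relation.EqvGen (ElemDihomotopic n Y)

/-! A directed path avoiding an open rectangle stays either in the closed region below it or in the
closed region above it, and a total one cannot do both. Along a homotopy the parameters at which
the path passes below therefore form a clopen subset of `[0, 1]`, so the side on which a total
path passes each hole is a dihomotopy invariant. Conversely, total paths passing every hole on the
same sides lie in one region closed under pointwise maximum, where `p` and `q` are both
dihomotopic to `p ⊔ q`. Passing below the lower-right hole forces passing below the upper-left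
one, and staircase paths realise the three remaining side patterns. -/

def openRect (a b c d : ℝ) : Set (Fin 2 → ℝ) := {z | z 0 ∈ Ioo a b ∧ z 1 ∈ Ioo c d}

/-- A directed path passes below the rectangle `openRect a b c d` when it stays in this set. -/
def lowerRegion (b c : ℝ) : Set (Fin 2 → ℝ) := {z | z 1 ≤ c ∨ b ≤ z 0}

def upperRegion (a d : ℝ) : Set (Fin 2 → ℝ) := {z | z 0 ≤ a ∨ d ≤ z 1}

def PassesBelow (b c : ℝ) (p : unitInterval → Fin 2 → ℝ) : Prop := ∀ u, p u ∈ lowerRegion b c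

def PassesAbove (a d : ℝ) (p : unitInterval → Fin 2 → ℝ) : Prop := ∀ u, p u ∈ upperRegion a d

section Regions

variable {a b c d : ℝ}

theorem isClosed_lowerRegion : IsClosed (lowerRegion b c) :=
  (isClosed_le (continuous_apply 1) continuous_const).union
    (isClosed_le continuous_const (continuous_apply 0))

theorem isClosed_upperRegion : IsClosed (upperRegion a d) :=
  (isClosed_le (continuous_apply 0) continuous_const).union
    (isClosed_le continuous_const (continuous_apply 1))

theorem supClosed_lowerRegion : SupClosed (lowerRegion b c) := by
  rintro _ (hz | hz) _ (hw | hw)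
  · exact Or.inl (sup_le hz hw)
  · exact Or.inr (le_sup_of_le_right hw)
  all_goals exact Or.inr (le_sup_of_le_left hz)

theorem supClosed_upperRegion : SupClosed (upperRegion a d) := by
  rintro _ (hz | hz) _ (hw | hw)
  · exact Or.inl (sup_le hz hw)
  · exact Or.inr (le_sup_of_le_right hw)
  all_goals exact Or.inr (le_sup_of_le_left hz)

theorem supClosed_cube (n : ℕ) : SupClosed (cube n) :=
  fun _ hz _ hw j => ⟨le_sup_of_le_left (hz j).1, sup_le (hz j).2 (hw j).2⟩

theorem disjoint_lowerRegion_openRect : Disjoint (lowerRegion b c) (openRect a b c d) := by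
  rw [disjoint_left]
  rintro z (hz | hz) ⟨⟨-, hzb⟩, hcz, -⟩ <;> linarith

theorem disjoint_upperRegion_openRect : Disjoint (upperRegion a d) (openRect a b c d) := by
  rw [disjoint_left]
  rintro z (hz | hz) ⟨⟨haz, -⟩, -, hzd⟩ <;> linarith

theorem PassesBelow.mono {b' c' : ℝ} {p : unitInterval → Fin 2 → ℝ} (h : PassesBelow b' c' p)
    (hb : b ≤ b') (hc : c' ≤ c) : PassesBelow b c p := fun u =>
  (h u).imp (fun hu => hu.trans hc) (fun hu => hb.trans hu)

end Regions

section Sides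

variable {a b c d : ℝ} {Y : Set (Fin 2 → ℝ)} {p : unitInterval → Fin 2 → ℝ}

theorem exists_mem_Ioo_of_monotone {f g : unitInterval → ℝ} (hf : Continuous f)
    (hgm : Monotone g) (hab : a < b) {u v : unitInterval} (huv : u ≤ v)
    (hu : f u < b ∧ c < g u) (hv : a < f v ∧ g v < d) :
    ∃ w, f w ∈ Ioo a b ∧ g w ∈ Ioo c d := by
  have hgu : g u ∈ Ioo c d := ⟨hu.2, (hgm huv).trans_lt hv.2⟩
  have hgv : g v ∈ Ioo c d := ⟨hu.2.trans_le (hgm huv), hv.2⟩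
  rcases lt_or_ge a (f u) with hfu | hfu
  · exact ⟨u, ⟨hfu, hu.1⟩, hgu⟩
  rcases lt_or_ge (f v) b with hfv | hfv
  · exact ⟨v, ⟨hv.1, hfv⟩, hgv⟩
  obtain ⟨w, ⟨huw, hwv⟩, hw⟩ := intermediate_value_Icc huv hf.continuousOn
    (show (a + b) / 2 ∈ Icc (f u) (f v) by constructor <;> linarith)
  exact ⟨w, by rw [hw]; constructor <;> linarith,
    hgu.1.trans_le (hgm huw), (hgm hwv).trans_lt hgv.2⟩

theorem IsDiPath.passesBelow_or_passesAbove (hp : IsDiPath 2 Y p)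
    (hY : Disjoint Y (openRect a b c d)) (hab : a < b) (hcd : c < d) :
    PassesBelow b c p ∨ PassesAbove a d p := by
  refine or_iff_not_imp_left.mpr fun hbelow v => by_contra fun hv => ?_
  obtain ⟨u, hu⟩ := not_forall.mp hbelow
  simp only [lowerRegion, upperRegion, mem_ofPred_eq, not_or, not_le] at hu hv
  have avoid : ∀ w, ¬ (p w 0 ∈ Ioo a b ∧ p w 1 ∈ Ioo c d) :=
    fun w => hY.notMem_of_mem_left (hp.2.1 w)
  rcases le_total u v with huv | hvu
  · obtain ⟨w, hw⟩ := exists_mem_Ioo_of_monotone ((continuous_apply 0).comp hp.1)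
      (hp.2.2 1) hab huv hu.symm hv
    exact avoid w hw
  · obtain ⟨w, hw⟩ := exists_mem_Ioo_of_monotone ((continuous_apply 1).comp hp.1)
      (hp.2.2 0) hcd hvu hv.symm hu
    exact avoid w hw.symm

theorem IsTotalDiPath.not_passesBelow_and_passesAbove (hp : IsTotalDiPath 2 Y p) (ha : 0 ≤ a)
    (hab : a < b) (hb : b ≤ 1) (hcd : c < d) : ¬ (PassesBelow b c p ∧ PassesAbove a d p) := by
  rintro ⟨hbelow, habove⟩
  obtain ⟨u, hu⟩ : (a + b) / 2 ∈ range fun t => p t 0 :=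
    intermediate_value_univ 0 1 ((continuous_apply 0).comp hp.1.1)
      (show (a + b) / 2 ∈ Icc (p 0 0) (p 1 0) by rw [hp.2.1, hp.2.2]; constructor <;> linarith)
  rcases hbelow u with h | h <;> rcases habove u with h' | h' <;> linarith

end Sides

theorem forall_apply_mem_iff_of_isClosed {T U E : Type*} [TopologicalSpace T]
    [PreconnectedSpace T] [TopologicalSpace E] {A B : Set E} (hA : IsClosed A) (hB : IsClosed B)
    {H : T → U → E} (hH : ∀ u, Continuous fun t => H t u)
    (hcover : ∀ t, (∀ u, H t u ∈ A) ∨ ∀ u, H t u ∈ B)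
    (hdisj : ∀ t, ¬ ((∀ u, H t u ∈ A) ∧ ∀ u, H t u ∈ B)) (s t : T) :
    (∀ u, H s u ∈ A) ↔ ∀ u, H t u ∈ A := by
  have closed : ∀ C : Set E, IsClosed C → IsClosed {t | ∀ u, H t u ∈ C} := fun C hC => by
    rw [show {t | ∀ u, H t u ∈ C} = ⋂ u, (fun t => H t u) ⁻¹' C by ext; simp]
    exact isClosed_iInter fun u => hC.preimage (hH u)
  have hcompl : {t | ∀ u, H t u ∈ A}ᶜ = {t | ∀ u, H t u ∈ B} := by
    ext t
    have := hcover t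
    have := hdisj t
    simp only [mem_compl_iff, mem_ofPred_eq]
    tauto
  have hclopen : IsClopen {t | ∀ u, H t u ∈ A} :=
    ⟨closed A hA, by rw [← isClosed_compl_iff, hcompl]; exact closed B hB⟩
  have hst : s ∈ {t | ∀ u, H t u ∈ A} ↔ t ∈ {t | ∀ u, H t u ∈ A} := by
    rcases isClopen_iff.mp hclopen with h | h <;> simp only [h, mem_empty_iff_false, mem_univ]
  exact hst

section TotalPaths

variable {n : ℕ} {Y Z : Set (Fin n → ℝ)} {p q : unitInterval → Fin n → ℝ}

theorem IsDiPath.mono (hYZ : Y ⊆ Z) (hp : IsDiPath n Y p) : IsDiPath n Z p :=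
  ⟨hp.1, fun t => hYZ (hp.2.1 t), hp.2.2⟩

theorem Dihomotopic.mono (hYZ : Y ⊆ Z) (h : Dihomotopic n Y p q) : Dihomotopic n Z p q :=
  Relation.EqvGen.mono (fun _ _ ⟨hp, hq, h0, h1, H, hHc, hH0, hH1, hH, hHm⟩ =>
    ⟨hp.mono hYZ, hq.mono hYZ, h0, h1, H, hHc, hH0, hH1, fun t => (hH t).mono hYZ, hHm⟩) _ _ h

/-- Monotonicity in the homotopy parameter pins the endpoints of every intermediate path. -/
theorem ElemDihomotopic.exists_homotopy_isTotalDiPath (h : ElemDihomotopic n Y p q)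
    (hp : IsTotalDiPath n Y p) :
    ∃ H : unitInterval → unitInterval → Fin n → ℝ,
      Continuous (fun tu : unitInterval × unitInterval => H tu.1 tu.2) ∧
      H 0 = p ∧ H 1 = q ∧ ∀ t, IsTotalDiPath n Y (H t) := by
  obtain ⟨-, -, h0, h1, H, hHc, hH0, hH1, hH, hHm⟩ := h
  have pinned : ∀ t s, H 1 s = H 0 s → H t s = H 0 s := fun t s hs => funext fun j =>
    le_antisymm (congrFun hs j ▸ hHm s j unitInterval.le_one') (hHm s j unitInterval.nonneg')
  refine ⟨H, hHc, hH0, hH1, fun t => ⟨hH t, ?_, ?_⟩⟩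
  · rw [pinned t 0 (by rw [hH0, hH1, h0]), hH0, hp.2.1]
  · rw [pinned t 1 (by rw [hH0, hH1, h1]), hH0, hp.2.2]

theorem ElemDihomotopic.isTotalDiPath_iff (h : ElemDihomotopic n Y p q) :
    IsTotalDiPath n Y p ↔ IsTotalDiPath n Y q := by
  simp only [IsTotalDiPath, h.1, h.2.1, h.2.2.1, h.2.2.2.1, true_and]

theorem Dihomotopic.isTotalDiPath_iff (h : Dihomotopic n Y p q) :
    IsTotalDiPath n Y p ↔ IsTotalDiPath n Y q := by
  induction h with
  | rel _ _ h => exact h.isTotalDiPath_iff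
  | refl => exact Iff.rfl
  | symm _ _ _ ih => exact ih.symm
  | trans _ _ _ _ _ ih₁ ih₂ => exact ih₁.trans ih₂

end TotalPaths

section SideInvariance

variable {a b c d : ℝ} {Y : Set (Fin 2 → ℝ)} {p q : unitInterval → Fin 2 → ℝ}

theorem ElemDihomotopic.passesBelow_iff (h : ElemDihomotopic 2 Y p q) (hp : IsTotalDiPath 2 Y p)
    (hY : Disjoint Y (openRect a b c d)) (ha : 0 ≤ a) (hab : a < b) (hb : b ≤ 1) (hcd : c < d) :
    PassesBelow b c p ↔ PassesBelow b c q := by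
  obtain ⟨H, hHc, rfl, rfl, hH⟩ := h.exists_homotopy_isTotalDiPath hp
  exact forall_apply_mem_iff_of_isClosed isClosed_lowerRegion isClosed_upperRegion
    (fun u => hHc.comp (Continuous.prodMk_left u))
    (fun t => (hH t).1.passesBelow_or_passesAbove hY hab hcd)
    (fun t => (hH t).not_passesBelow_and_passesAbove ha hab hb hcd) 0 1

theorem Dihomotopic.passesBelow_iff (h : Dihomotopic 2 Y p q) (hp : IsTotalDiPath 2 Y p)
    (hY : Disjoint Y (openRect a b c d)) (ha : 0 ≤ a) (hab : a < b) (hb : b ≤ 1) (hcd : c < d) :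
    PassesBelow b c p ↔ PassesBelow b c q := by
  induction h with
  | rel _ _ h => exact h.passesBelow_iff hp hY ha hab hb hcd
  | refl => exact Iff.rfl
  | symm _ _ h ih => exact (ih ((Dihomotopic.isTotalDiPath_iff h).mpr hp)).symm
  | trans _ _ _ h _ ih₁ ih₂ =>
    exact (ih₁ hp).trans (ih₂ ((Dihomotopic.isTotalDiPath_iff h).mp hp))

end SideInvariance

section SupClosed

variable {n : ℕ} {Y : Set (Fin n → ℝ)} {p q : unitInterval → Fin n → ℝ}

theorem IsDiPath.sup (hY : SupClosed Y) (hp : IsDiPath n Y p) (hq : IsDiPath n Y q) :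
    IsDiPath n Y (p ⊔ q) :=
  ⟨continuous_pi fun j => ((continuous_apply j).comp hp.1).max ((continuous_apply j).comp hq.1),
    fun t => hY (hp.2.1 t) (hq.2.1 t), fun j => (hp.2.2 j).max (hq.2.2 j)⟩

/-- The homotopy `(t, u) ↦ p u ⊔ q (t * u)` starts at `p ⊔ q 0 = p` and ends at `p ⊔ q`. -/
theorem elemDihomotopic_sup (hY : SupClosed Y) (hp : IsDiPath n Y p) (hq : IsDiPath n Y q)
    (h0 : p 0 = q 0) (h1 : p 1 = q 1) : ElemDihomotopic n Y p (p ⊔ q) := by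
  have hH : ∀ t : unitInterval, IsDiPath n Y fun u => p u ⊔ q (t * u) := fun t =>
    hp.sup hY ⟨hq.1.comp (continuous_const.mul continuous_id), fun u => hq.2.1 _,
      fun j => (hq.2.2 j).comp fun _ _ h => mul_le_mul_right h t⟩
  refine ⟨hp, hp.sup hY hq, by simp [h0], by simp [h1], fun t u => p u ⊔ q (t * u), ?_, ?_,
    funext fun u => congrArg (p u ⊔ q ·) (one_mul u), hH,
    fun u j => monotone_const.max ((hq.2.2 j).comp fun _ _ h => mul_le_mul_left h u)⟩
  · exact continuous_pi fun j => (((continuous_apply j).comp hp.1).comp continuous_snd).max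
      (((continuous_apply j).comp hq.1).comp (continuous_fst.mul continuous_snd))
  · funext u
    show p u ⊔ q (0 * u) = p u
    rw [zero_mul, ← h0, sup_eq_left]
    exact fun j => hp.2.2 j unitInterval.nonneg'

theorem dihomotopic_of_supClosed (hY : SupClosed Y) (hp : IsDiPath n Y p) (hq : IsDiPath n Y q)
    (h0 : p 0 = q 0) (h1 : p 1 = q 1) : Dihomotopic n Y p q := by
  have hpq := elemDihomotopic_sup hY hp hq h0 h1
  have hqp := elemDihomotopic_sup hY hq hp h0.symm h1.symm
  rw [sup_comm] at hqp
  exact .trans _ _ _ (.rel _ _ hpq) (.symm _ _ (.rel _ _ hqp))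

end SupClosed

theorem dihomotopic_iff_forall_passesBelow_iff {ι : Type*} {a b c d : ι → ℝ}
    (ha : ∀ i, 0 ≤ a i) (hab : ∀ i, a i < b i) (hb : ∀ i, b i ≤ 1) (hcd : ∀ i, c i < d i)
    {X : Set (Fin 2 → ℝ)} (hX : X = cube 2 \ ⋃ i, openRect (a i) (b i) (c i) (d i))
    {p q : unitInterval → Fin 2 → ℝ} (hp : IsTotalDiPath 2 X p) (hq : IsTotalDiPath 2 X q) :
    Dihomotopic 2 X p q ↔ ∀ i, (PassesBelow (b i) (c i) p ↔ PassesBelow (b i) (c i) q) := by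
  classical
  have hXi : ∀ i, Disjoint X (openRect (a i) (b i) (c i) (d i)) := fun i =>
    hX ▸ disjoint_sdiff_left.mono_right
      (subset_iUnion (fun i => openRect (a i) (b i) (c i) (d i)) i)
  refine ⟨fun h i => h.passesBelow_iff hp (hXi i) (ha i) (hab i) (hb i) (hcd i), fun h => ?_⟩
  let Y := cube 2 ∩ ⋂ i,
    if PassesBelow (b i) (c i) p then lowerRegion (b i) (c i) else upperRegion (a i) (d i)
  have hYX : Y ⊆ X := by
    rintro z ⟨hz, hzY⟩
    refine hX ▸ ⟨hz, mem_iUnion.not.mpr (not_exists.mpr fun i => ?_)⟩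
    have hzi := mem_iInter.mp hzY i
    split_ifs at hzi
    exacts [disjoint_lowerRegion_openRect.notMem_of_mem_left hzi,
      disjoint_upperRegion_openRect.notMem_of_mem_left hzi]
  have hY : SupClosed Y := (supClosed_cube 2).inter <| supClosed_iInter fun i => by
    split_ifs
    exacts [supClosed_lowerRegion, supClosed_upperRegion]
  have mem : ∀ r, IsTotalDiPath 2 X r → (∀ i, (PassesBelow (b i) (c i) p ↔
      PassesBelow (b i) (c i) r)) → IsDiPath 2 Y r := fun r hr hpr => by
    refine ⟨hr.1.1, fun u => ⟨(hX ▸ hr.1.2.1 u).1, mem_iInter.mpr fun i => ?_⟩, hr.1.2.2⟩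
    split_ifs with hpi
    · exact (hpr i).mp hpi u
    · exact ((hr.1.passesBelow_or_passesAbove (hXi i) (hab i) (hcd i)).resolve_left
        ((hpr i).not.mp hpi)) u
  exact (dihomotopic_of_supClosed hY (mem p hp fun _ => Iff.rfl) (mem q hq h)
    (hp.2.1.trans hq.2.1.symm) (hp.2.2.trans hq.2.2.symm)).mono hYX

section StairPath

variable {α : ℝ}

/-- The path `(0,0) → (α,0) → (α,1) → (1,1)`, one segment per third of the time. -/
noncomputable def stairPath (α : ℝ) (t : unitInterval) : Fin 2 → ℝ :=
  ![α * projIcc (0 : ℝ) 1 zero_le_one (3 * t)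
      + (1 - α) * projIcc (0 : ℝ) 1 zero_le_one (3 * t - 2),
    projIcc (0 : ℝ) 1 zero_le_one (3 * t - 1)]

theorem stairPath_cases (hα0 : 0 ≤ α) (hα1 : α ≤ 1) (t : unitInterval) :
    (stairPath α t 1 = 0 ∧ stairPath α t 0 ∈ Icc 0 α) ∨
    (stairPath α t 0 = α ∧ stairPath α t 1 ∈ Icc 0 1) ∨
    (stairPath α t 1 = 1 ∧ stairPath α t 0 ∈ Icc α 1) := by
  have clamp_zero : ∀ s : ℝ, s ≤ 0 → (projIcc (0 : ℝ) 1 zero_le_one s : ℝ) = 0 :=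
    fun s hs => by rw [projIcc_of_le_left _ hs]
  have clamp_one : ∀ s : ℝ, 1 ≤ s → (projIcc (0 : ℝ) 1 zero_le_one s : ℝ) = 1 :=
    fun s hs => by rw [projIcc_of_right_le _ hs]
  have clamp_mem : ∀ s : ℝ, (projIcc (0 : ℝ) 1 zero_le_one s : ℝ) ∈ Icc 0 1 :=
    fun s => (projIcc 0 1 _ s).2
  simp only [stairPath, Matrix.cons_val_zero, Matrix.cons_val_one]
  rcases le_total (3 * (t : ℝ)) 1 with h1 | h1
  · rw [clamp_zero (3 * t - 1) (by linarith), clamp_zero (3 * t - 2) (by linarith)]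
    have := clamp_mem (3 * t)
    exact Or.inl ⟨rfl, by constructor <;> nlinarith [this.1, this.2]⟩
  rcases le_total (3 * (t : ℝ)) 2 with h2 | h2
  · rw [clamp_one (3 * t) h1, clamp_zero (3 * t - 2) (by linarith)]
    exact Or.inr (Or.inl ⟨by ring, clamp_mem _⟩)
  · rw [clamp_one (3 * t) (by linarith), clamp_one (3 * t - 1) (by linarith)]
    have := clamp_mem (3 * t - 2)
    exact Or.inr (Or.inr ⟨rfl, by constructor <;> nlinarith [this.1, this.2]⟩)

theorem isTotalDiPath_stairPath (hα0 : 0 ≤ α) (hα1 : α ≤ 1) {Y : Set (Fin 2 → ℝ)}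
    (hY : ∀ t, stairPath α t ∈ Y) : IsTotalDiPath 2 Y (stairPath α) := by
  have clamp_mono : ∀ k : ℝ, Monotone fun t : unitInterval =>
      (projIcc (0 : ℝ) 1 zero_le_one (3 * t - k) : ℝ) := fun k s t hst =>
    Subtype.mono_coe _ (monotone_projIcc _ (by have : (s : ℝ) ≤ t := hst; linarith))
  refine ⟨⟨continuous_pi fun j => ?_, hY, Fin.forall_fin_two.mpr ⟨?_, ?_⟩⟩, ?_, ?_⟩
  · fin_cases j <;> simp only [stairPath] <;> fun_prop
  · simpa only [stairPath, Matrix.cons_val_zero, sub_zero] using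
      ((clamp_mono 0).const_mul hα0).add ((clamp_mono 2).const_mul (sub_nonneg.mpr hα1))
  · exact clamp_mono 1
  · funext j
    fin_cases j <;> simp [stairPath, projIcc_of_le_left]
  · funext j
    fin_cases j <;> norm_num [stairPath, projIcc_of_right_le]

theorem stairPath_mem_cube (hα0 : 0 ≤ α) (hα1 : α ≤ 1) (t : unitInterval) :
    stairPath α t ∈ cube 2 := by
  refine Fin.forall_fin_two.mpr ?_
  rcases stairPath_cases hα0 hα1 t with ⟨h1, h0⟩ | ⟨h0, h1⟩ | ⟨h1, h0⟩
  · exact ⟨⟨h0.1, h0.2.trans hα1⟩, by rw [h1]; exact left_mem_Icc.mpr zero_le_one⟩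
  · exact ⟨by rw [h0]; exact ⟨hα0, hα1⟩, h1⟩
  · exact ⟨⟨hα0.trans h0.1, h0.2⟩, by rw [h1]; exact right_mem_Icc.mpr zero_le_one⟩

theorem stairPath_passesBelow {b c : ℝ} (hα0 : 0 ≤ α) (hα1 : α ≤ 1) (hb : b ≤ α) (hc : 0 ≤ c) :
    PassesBelow b c (stairPath α) := fun t => by
  rcases stairPath_cases hα0 hα1 t with ⟨h1, -⟩ | ⟨h0, -⟩ | ⟨-, h0⟩
  exacts [Or.inl (h1.le.trans hc), Or.inr (hb.trans h0.ge), Or.inr (hb.trans h0.1)]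

theorem stairPath_passesAbove {a d : ℝ} (hα0 : 0 ≤ α) (hα1 : α ≤ 1) (ha : α ≤ a) (hd : d ≤ 1) :
    PassesAbove a d (stairPath α) := fun t => by
  rcases stairPath_cases hα0 hα1 t with ⟨-, h0⟩ | ⟨h0, -⟩ | ⟨h1, -⟩
  exacts [Or.inl (h0.2.trans ha), Or.inl (h0.le.trans ha), Or.inr (hd.trans h1.ge)]

theorem passesBelow_stairPath_iff {a b c d : ℝ} (hα0 : 0 ≤ α) (hα1 : α ≤ 1) (hα : α ∉ Ioo a b)
    (ha : 0 ≤ a) (hab : a < b) (hb : b ≤ 1) (hc : 0 ≤ c) (hcd : c < d) (hd : d ≤ 1) :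
    PassesBelow b c (stairPath α) ↔ b ≤ α := by
  refine ⟨fun hbelow => le_of_not_gt fun hαb => ?_, fun hbα =>
    stairPath_passesBelow hα0 hα1 hbα hc⟩
  have hαa : α ≤ a := le_of_not_gt fun haα => hα ⟨haα, hαb⟩
  have htotal : IsTotalDiPath 2 univ (stairPath α) :=
    isTotalDiPath_stairPath hα0 hα1 fun _ => mem_univ _
  exact htotal.not_passesBelow_and_passesAbove ha hab hb hcd
    ⟨hbelow, stairPath_passesAbove hα0 hα1 hαa hd⟩

theorem isTotalDiPath_stairPath_cube_sdiff {ι : Type*} {a b c d : ι → ℝ} (hα0 : 0 ≤ α)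
    (hα1 : α ≤ 1) (hα : ∀ i, α ∉ Ioo (a i) (b i)) (hc : ∀ i, 0 ≤ c i) (hd : ∀ i, d i ≤ 1) :
    IsTotalDiPath 2 (cube 2 \ ⋃ i, openRect (a i) (b i) (c i) (d i)) (stairPath α) := by
  refine isTotalDiPath_stairPath hα0 hα1 fun t =>
    ⟨stairPath_mem_cube hα0 hα1 t, mem_iUnion.not.mpr (not_exists.mpr fun i => ?_)⟩
  rcases le_or_gt (b i) α with hbα | hαb
  · exact disjoint_lowerRegion_openRect.notMem_of_mem_left
      (stairPath_passesBelow hα0 hα1 hbα (hc i) t)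
  · exact disjoint_upperRegion_openRect.notMem_of_mem_left
      (stairPath_passesAbove hα0 hα1 (le_of_not_gt fun h => hα i ⟨h, hαb⟩) (hd i) t)

theorem exists_isTotalDiPath_passesBelow_iff {ι : Type*} {a b c d : ι → ℝ}
    (ha : ∀ i, 0 ≤ a i) (hab : ∀ i, a i < b i) (hb : ∀ i, b i ≤ 1) (hc : ∀ i, 0 ≤ c i)
    (hcd : ∀ i, c i < d i) (hd : ∀ i, d i ≤ 1) (hα0 : 0 ≤ α) (hα1 : α ≤ 1)
    (hα : ∀ i, α ∉ Ioo (a i) (b i)) :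
    ∃ p, IsTotalDiPath 2 (cube 2 \ ⋃ i, openRect (a i) (b i) (c i) (d i)) p ∧
      ∀ i, (PassesBelow (b i) (c i) p ↔ b i ≤ α) :=
  ⟨stairPath α, isTotalDiPath_stairPath_cube_sdiff hα0 hα1 hα hc hd, fun i =>
    passesBelow_stairPath_iff hα0 hα1 (hα i) (ha i) (hab i) (hb i) (hc i) (hcd i) (hd i)⟩

end StairPath

theorem card_quot_eq_card_range {α β : Type*} {r : α → α → Prop} (f : α → β)
    (h : ∀ x y, r x y ↔ f x = f y) : Nat.card (Quot r) = Nat.card (range f) :=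
  Nat.card_congr ((Quot.congrRight h).trans (Setoid.quotientKerEquivRange f))

theorem card_quot_dihomotopic_two_holes {a b c d : Fin 2 → ℝ}
    (ha : ∀ i, 0 ≤ a i) (hab : ∀ i, a i < b i) (hb : ∀ i, b i ≤ 1) (hc : ∀ i, 0 ≤ c i)
    (hcd : ∀ i, c i < d i) (hd : ∀ i, d i ≤ 1) (hba : b 0 ≤ a 1) (hdc : d 1 ≤ c 0)
    {X : Set (Fin 2 → ℝ)} (hX : X = cube 2 \ ⋃ i, openRect (a i) (b i) (c i) (d i)) :
    Nat.card (Quot fun p q : {p : unitInterval → Fin 2 → ℝ // IsTotalDiPath 2 X p} =>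
      Dihomotopic 2 X p.1 q.1) = 3 := by
  classical
  let side : {p // IsTotalDiPath 2 X p} → Bool × Bool := fun p =>
    (decide (PassesBelow (b 0) (c 0) p.1), decide (PassesBelow (b 1) (c 1) p.1))
  have hker : ∀ p q, Dihomotopic 2 X p.1 q.1 ↔ side p = side q := fun p q => by
    rw [dihomotopic_iff_forall_passesBelow_iff ha hab hb hcd hX p.2 q.2, Fin.forall_fin_two]
    simp [side, Prod.ext_iff]
  have rep : ∀ α ∈ Icc (0 : ℝ) 1, α ∉ Ioo (a 0) (b 0) → α ∉ Ioo (a 1) (b 1) →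
      (decide (b 0 ≤ α), decide (b 1 ≤ α)) ∈ range side := fun α hα hgap0 hgap1 => by
    obtain ⟨p, hp, hpb⟩ := exists_isTotalDiPath_passesBelow_iff ha hab hb hc hcd hd hα.1 hα.2
      (Fin.forall_fin_two.mpr ⟨hgap0, hgap1⟩)
    exact ⟨⟨p, hX ▸ hp⟩, by simpa [side, decide_eq_decide] using ⟨hpb 0, hpb 1⟩⟩
  have hb0 : 0 < b 0 := (ha 0).trans_lt (hab 0)
  have hb01 : b 0 < b 1 := hba.trans_lt (hab 1)
  have hrange : range side = {(true, true), (true, false), (false, false)} := by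
    refine Subset.antisymm ?_ ?_
    · rintro _ ⟨p, rfl⟩
      by_cases hp0 : PassesBelow (b 0) (c 0) p.1
      · by_cases hp1 : PassesBelow (b 1) (c 1) p.1 <;> simp [side, hp0, hp1]
      · have hp1 : ¬ PassesBelow (b 1) (c 1) p.1 := fun h =>
          hp0 (h.mono hb01.le ((hcd 1).le.trans hdc))
        simp [side, hp0, hp1]
    · rintro _ (rfl | rfl | rfl)
      · simpa [hb 0, hb 1] using rep 1 ⟨zero_le_one, le_rfl⟩
          (fun h => (hb 0).not_gt h.2) (fun h => (hb 1).not_gt h.2)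
      · simpa [hb01.not_ge] using rep (b 0) ⟨hb0.le, hb 0⟩
          (fun h => h.2.false) (fun h => hba.not_gt h.1)
      · simpa [hb0.not_ge, (hb0.trans hb01).not_ge] using
          rep 0 ⟨le_rfl, zero_le_one⟩ (fun h => (ha 0).not_gt h.1) (fun h => (ha 1).not_gt h.1)
  rw [card_quot_eq_card_range side hker, hrange, Nat.card_coe_set_eq, ncard_eq_three]
  exact ⟨_, _, _, by decide, by decide, by decide, rfl⟩

theorem stmt12 (x00 y00 x10 y10 x01 y01 x11 y11 : ℝ)
    (h1 : 0 < x00) (h2 : x00 < y00) (h3 : y00 < x10) (h4 : x10 < y10) (h5 : y10 < 1)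
    (h6 : 0 < x11) (h7 : x11 < y11) (h8 : y11 < x01) (h9 : x01 < y01) (h10 : y01 < 1)
    (X : Set (Fin 2 → ℝ))
    (hX : X = cube 2 \
      ({z | z 0 ∈ Ioo x00 y00 ∧ z 1 ∈ Ioo x01 y01} ∪
       {z | z 0 ∈ Ioo x10 y10 ∧ z 1 ∈ Ioo x11 y11})) :
    Nat.card (Quot fun p q : {p : unitInterval → Fin 2 → ℝ // IsTotalDiPath 2 X p} =>
      Dihomotopic 2 X p.1 q.1) = 3 := by
  have hX' : X = cube 2 \ ⋃ i, openRect (![x00, x10] i) (![y00, y10] i) (![x01, x11] i)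
      (![y01, y11] i) := by
    rw [hX]
    congr 1
    ext z
    simp [Fin.exists_fin_two, openRect]
  refine card_quot_dihomotopic_two_holes ?_ ?_ ?_ ?_ ?_ ?_ h3.le h8.le hX' <;>
    refine Fin.forall_fin_two.mpr ⟨?_, ?_⟩ <;>
    simp only [Matrix.cons_val_zero, Matrix.cons_val_one] <;> linarith
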